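/- arXiv:2403.07723 — 4 statements merged into one kernel-verified Lean document; each statement's English description precedes it below -/
import Mathlib

section
/- Let d_2, ..., d_{K+1} be a sequence of real numbers and a, b, c > 0 be constants such that for every k in [K], d_{k+1} ≤ a/k + b(1 + log k) + c · Σ_{ℓ=2}^{k} d_ℓ/(k - ℓ + 2). Then for every k in [K], d_{k+1} ≤ (a/k + b(1 + log k)) · Σ_{i=0}^{k-1} (2c(1 + log k))^i. -/
/-!
Strong induction on `k`. Write `A = a/k + b(1 + log k)`, `x = 2c(1 + log k)` and
`T = ∑_{i < k-1} xⁱ`. Since `log` and geometric sums are monotone, the induction hypothesis gives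
`d_ℓ ≤ (a/(ℓ-1) + b(1 + log k)) T` for `2 ≤ ℓ ≤ k`. The partial fractions
`1/((ℓ-1)(k-ℓ+2)) = (1/(k+1)) (1/(ℓ-1) + 1/(k-ℓ+2))` and the harmonic bound `H_n ≤ 1 + log n`
turn the convolution sum into at most `2(1 + log k) A T`, so `d_{k+1} ≤ A (1 + x T) = A ∑_{i<k} xⁱ`.
-/

open Finset Real

theorem Finset.sum_Icc_reflect {M : Type*} [AddCommMonoid M] (f : ℕ → M) (m n : ℕ) :
    ∑ i ∈ Icc m n, f (m + n - i) = ∑ i ∈ Icc m n, f i :=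
  sum_nbij' (fun i ↦ m + n - i) (fun i ↦ m + n - i)
    (fun i hi ↦ by simp only [mem_Icc] at *; omega)
    (fun i hi ↦ by simp only [mem_Icc] at *; omega)
    (fun i hi ↦ by simp only [mem_Icc] at *; omega)
    (fun i hi ↦ by simp only [mem_Icc] at *; omega)
    (fun _ _ ↦ rfl)

lemma sum_Icc_one_inv_le_one_add_log (n : ℕ) : ∑ i ∈ Icc 1 n, (i : ℝ)⁻¹ ≤ 1 + log n := by
  simpa [harmonic_eq_sum_Icc] using harmonic_le_one_add_log n

lemma sum_Icc_two_inv_le_log (n : ℕ) : ∑ i ∈ Icc 2 n, (i : ℝ)⁻¹ ≤ log n := by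
  rcases Nat.eq_zero_or_pos n with rfl | hn
  · simp
  have := sum_Icc_one_inv_le_one_add_log n
  rwa [← add_sum_Ioc_eq_sum_Icc hn, ← Icc_add_one_left_eq_Ioc, Nat.cast_one, inv_one,
    add_le_add_iff_left] at this

lemma sum_Icc_two_inv_sub_one_le (k : ℕ) : ∑ ℓ ∈ Icc 2 k, ((ℓ : ℝ) - 1)⁻¹ ≤ 1 + log k := by
  rcases k with _ | n
  · simp
  rw [← map_add_right_Icc 1 n 1, sum_map]
  simp only [addRightEmbedding_apply, Nat.cast_add, Nat.cast_one, add_sub_cancel_right]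
  refine (sum_Icc_one_inv_le_one_add_log n).trans ?_
  rcases Nat.eq_zero_or_pos n with rfl | hn
  · simp
  · gcongr
    linarith

lemma sum_Icc_two_inv_reflect_le (k : ℕ) : ∑ ℓ ∈ Icc 2 k, ((k : ℝ) - ℓ + 2)⁻¹ ≤ log k := by
  have hcast : ∀ ℓ ∈ Icc 2 k, ((k : ℝ) - ℓ + 2)⁻¹ = (((2 + k - ℓ : ℕ) : ℝ))⁻¹ := by
    intro ℓ hℓ
    rw [Nat.cast_sub (by have := (mem_Icc.mp hℓ).2; omega)]
    push_cast; ring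
  rw [sum_congr rfl hcast, sum_Icc_reflect (fun i ↦ (i : ℝ)⁻¹)]
  exact sum_Icc_two_inv_le_log k

lemma sum_Icc_two_inv_mul_reflect_le {k : ℕ} (hk : 1 ≤ k) :
    ∑ ℓ ∈ Icc 2 k, (((ℓ : ℝ) - 1) * ((k : ℝ) - ℓ + 2))⁻¹ ≤ 2 * (1 + log k) / k := by
  have hk' : (1 : ℝ) ≤ k := by exact_mod_cast hk
  have hsplit : ∀ ℓ ∈ Icc 2 k, (((ℓ : ℝ) - 1) * ((k : ℝ) - ℓ + 2))⁻¹
      = ((k : ℝ) + 1)⁻¹ * (((ℓ : ℝ) - 1)⁻¹ + ((k : ℝ) - ℓ + 2)⁻¹) := by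
    intro ℓ hℓ
    obtain ⟨hℓ2, hℓk⟩ := mem_Icc.mp hℓ
    have hℓ2' : (2 : ℝ) ≤ ℓ := by exact_mod_cast hℓ2
    have hℓk' : (ℓ : ℝ) ≤ k := by exact_mod_cast hℓk
    field_simp [show (ℓ : ℝ) - 1 ≠ 0 by linarith, show (k : ℝ) - ℓ + 2 ≠ 0 by linarith]
    ring
  have hlog : 0 ≤ log k := log_nonneg hk'
  calc ∑ ℓ ∈ Icc 2 k, (((ℓ : ℝ) - 1) * ((k : ℝ) - ℓ + 2))⁻¹
      = ((k : ℝ) + 1)⁻¹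
          * (∑ ℓ ∈ Icc 2 k, ((ℓ : ℝ) - 1)⁻¹ + ∑ ℓ ∈ Icc 2 k, ((k : ℝ) - ℓ + 2)⁻¹) := by
        rw [sum_congr rfl hsplit, ← mul_sum, sum_add_distrib]
    _ ≤ ((k : ℝ) + 1)⁻¹ * ((1 + log k) + log k) := by
        gcongr
        exacts [sum_Icc_two_inv_sub_one_le k, sum_Icc_two_inv_reflect_le k]
    _ ≤ 2 * (1 + log k) / k := by
        rw [inv_mul_eq_div, div_le_div_iff₀ (by positivity) (by positivity)]
        nlinarith

lemma geom_sum_le_geom_sum {x y : ℝ} (hx : 0 ≤ x) (hxy : x ≤ y) {m n : ℕ} (hmn : m ≤ n) :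
    ∑ i ∈ range m, x ^ i ≤ ∑ i ∈ range n, y ^ i :=
  (sum_le_sum fun i _ ↦ pow_le_pow_left₀ hx hxy i).trans <|
    sum_le_sum_of_subset_of_nonneg (range_subset_range.2 hmn) fun i _ _ ↦
      pow_nonneg (hx.trans hxy) i

lemma sum_Icc_two_div_reflect_le {k : ℕ} (hk : 1 ≤ k) {a b T : ℝ} (ha : 0 ≤ a) (hb : 0 ≤ b)
    (hT : 0 ≤ T) {d : ℕ → ℝ} (hd : ∀ ℓ ∈ Icc 2 k, d ℓ ≤ (a / ((ℓ : ℝ) - 1) + b * (1 + log k)) * T) :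
    ∑ ℓ ∈ Icc 2 k, d ℓ / ((k : ℝ) - ℓ + 2)
      ≤ 2 * (1 + log k) * (a / k + b * (1 + log k)) * T := by
  have hk' : (1 : ℝ) ≤ k := by exact_mod_cast hk
  have hlog : 0 ≤ log k := log_nonneg hk'
  calc ∑ ℓ ∈ Icc 2 k, d ℓ / ((k : ℝ) - ℓ + 2)
      ≤ ∑ ℓ ∈ Icc 2 k, (a / ((ℓ : ℝ) - 1) + b * (1 + log k)) * T / ((k : ℝ) - ℓ + 2) := by
        refine sum_le_sum fun ℓ hℓ ↦ div_le_div_of_nonneg_right (hd ℓ hℓ) ?_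
        have : (ℓ : ℝ) ≤ k := by exact_mod_cast (mem_Icc.mp hℓ).2
        linarith
    _ = (a * ∑ ℓ ∈ Icc 2 k, (((ℓ : ℝ) - 1) * ((k : ℝ) - ℓ + 2))⁻¹
          + b * (1 + log k) * ∑ ℓ ∈ Icc 2 k, ((k : ℝ) - ℓ + 2)⁻¹) * T := by
        rw [mul_sum, mul_sum, ← sum_add_distrib, sum_mul]
        refine sum_congr rfl fun ℓ _ ↦ ?_
        rw [mul_inv]
        ring
    _ ≤ (a * (2 * (1 + log k) / k) + b * (1 + log k) * log k) * T := by
        gcongr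
        exacts [sum_Icc_two_inv_mul_reflect_le hk, sum_Icc_two_inv_reflect_le k]
    _ ≤ 2 * (1 + log k) * (a / k + b * (1 + log k)) * T := by
        have hsplit : a * (2 * (1 + log k) / k) = 2 * (1 + log k) * (a / k) := by ring
        rw [hsplit]
        have hpos : 0 ≤ b * (1 + log k) * (2 + log k) := by positivity
        nlinarith

lemma mul_geom_sum_le_of_lt {a b c : ℝ} (ha : 0 ≤ a) (hb : 0 ≤ b) (hc : 0 ≤ c) {m k : ℕ}
    (hm : 1 ≤ m) (hmk : m < k) :
    (a / m + b * (1 + log m)) * ∑ i ∈ range m, (2 * c * (1 + log m)) ^ i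
      ≤ (a / m + b * (1 + log k)) * ∑ i ∈ range (k - 1), (2 * c * (1 + log k)) ^ i := by
  have hm' : (1 : ℝ) ≤ m := by exact_mod_cast hm
  have hlog : log m ≤ log k := log_le_log (by linarith) (by exact_mod_cast hmk.le)
  have hlog0 : 0 ≤ log m := log_nonneg hm'
  gcongr
  exact geom_sum_le_geom_sum (by positivity) (by gcongr) (by omega)

theorem stmt_0_general (K : ℕ) (d : ℕ → ℝ) (a b c : ℝ)
    (ha : 0 < a) (hb : 0 < b) (hc : 0 < c)
    (h : ∀ k ∈ Finset.Icc 1 K,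
      d (k + 1) ≤ a / k + b * (1 + Real.log k)
        + c * ∑ ℓ ∈ Finset.Icc 2 k, d ℓ / ((k : ℝ) - ℓ + 2)) :
    ∀ k ∈ Finset.Icc 1 K,
      d (k + 1) ≤ (a / k + b * (1 + Real.log k))
        * ∑ i ∈ Finset.range k, (2 * c * (1 + Real.log k)) ^ i := by
  intro k hk
  induction k using Nat.strong_induction_on with
  | _ k ih =>
  obtain ⟨hk1, hkK⟩ := mem_Icc.mp hk
  set A := a / k + b * (1 + log k)
  set x := 2 * c * (1 + log k)
  set T := ∑ i ∈ range (k - 1), x ^ i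
  have hprev : ∀ ℓ ∈ Icc 2 k, d ℓ ≤ (a / ((ℓ : ℝ) - 1) + b * (1 + log k)) * T := by
    intro ℓ hℓ
    obtain ⟨hℓ2, hℓk⟩ := mem_Icc.mp hℓ
    have hdℓ := ih (ℓ - 1) (by omega) (mem_Icc.mpr ⟨by omega, by omega⟩)
    rw [Nat.sub_add_cancel (by omega)] at hdℓ
    have hℓ1 : ((ℓ - 1 : ℕ) : ℝ) = ℓ - 1 := by rw [Nat.cast_sub (by omega), Nat.cast_one]
    rw [← hℓ1]
    exact hdℓ.trans (mul_geom_sum_le_of_lt ha.le hb.le hc.le (by omega) (by omega))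
  have hgeom : ∑ i ∈ range k, x ^ i = x * T + 1 := by
    rw [← geom_sum_succ, Nat.sub_add_cancel hk1]
  calc d (k + 1) ≤ A + c * ∑ ℓ ∈ Icc 2 k, d ℓ / ((k : ℝ) - ℓ + 2) := h k hk
    _ ≤ A + c * (2 * (1 + log k) * A * T) := by
        gcongr
        exact sum_Icc_two_div_reflect_le hk1 ha.le hb.le (by positivity) hprev
    _ = A * ∑ i ∈ range k, x ^ i := by
        rw [hgeom]
        ring

theorem stmt_0 (K : ℕ) (hK : 1 ≤ K) (d : ℕ → ℝ) (a b c : ℝ)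
    (ha : 0 < a) (hb : 0 < b) (hc : 0 < c)
    (h : ∀ k ∈ Finset.Icc 1 K,
      d (k + 1) ≤ a / k + b * (1 + Real.log k)
        + c * ∑ ℓ ∈ Finset.Icc 2 k, d ℓ / ((k : ℝ) - ℓ + 2)) :
    ∀ k ∈ Finset.Icc 1 K,
      d (k + 1) ≤ (a / k + b * (1 + Real.log k))
        * ∑ i ∈ Finset.range k, (2 * c * (1 + Real.log k)) ^ i :=
  stmt_0_general K d a b c ha hb hc h
end

section
/- Let f_1, ..., f_n : ℝ^d → ℝ with n ≥ 2 and x_* ∈ ℝ^d, with L_i > 0 for each i. Let f = (1/n)Σ f_i, L̄ = (1/n)Σ L_i, σ²_any = (1/n)Σ‖∇f_i(x_*)‖², and σ²_rand = σ²_any + n‖∇f(x_*)‖². If σ is a permutation of [n] sampled uniformly at random, then E[Σ_{i=2}^n (L_{σ(i)}/n)·‖Σ_{j=1}^{i-1} ∇f_{σ(j)}(x_*)‖²] ≤ (2/3) n L̄ σ²_rand. -/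
/-!
Write `g b = ∇f_b(x_*)` and `τ = σ⁻¹`, so that the prefix of `σ` before the position of `a` is
`{b | τ b < τ a}`. For fixed `a`, expanding the squared norm of the prefix sum leaves only the
probabilities that `b`, or both `b` and `c`, precede `a` in a uniformly random order; these are
`1/2` and `1/3`, because each element of a finite set is equally likely to come last. Hence the
expectation equals `(1/n) ∑ₐ Lₐ (‖∑_{b≠a} g b‖²/3 + ∑_{b≠a} ‖g b‖²/6)`, and each summand is at
most `(2/3) (∑_b ‖g b‖² + ‖∑_b g b‖²)` by `‖u - v‖² ≤ 2‖u‖² + 2‖v‖²`.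
-/

open Finset Equiv

namespace Equiv.Perm

variable {α : Type*} [Fintype α] [LinearOrder α]

def ranksLast (s : Finset α) (a : α) : Finset (Perm α) :=
  univ.filter fun τ => ∀ x ∈ s, x ≠ a → τ x < τ a

theorem mul_swap_mem_ranksLast {s : Finset α} {a x : α} (hx : x ∈ s)
    {τ : Perm α} (hτ : τ ∈ ranksLast s a) : τ * swap a x ∈ ranksLast s x := by
  simp only [ranksLast, mem_filter, mem_univ, true_and, Perm.mul_apply, swap_apply_right]
    at hτ ⊢
  intro y hy hyx
  refine hτ _ ?_ ?_
  · rw [swap_apply_def]; split_ifs <;> assumption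
  · rwa [Ne, swap_apply_eq_iff, swap_apply_left]

theorem card_ranksLast_eq {s : Finset α} {a x : α} (ha : a ∈ s) (hx : x ∈ s) :
    #(ranksLast s x) = #(ranksLast s a) :=
  card_nbij' (· * swap a x) (· * swap a x)
    (fun _ hτ => by rw [swap_comm]; exact mul_swap_mem_ranksLast ha hτ)
    (fun _ hτ => mul_swap_mem_ranksLast hx hτ)
    (fun τ _ => mul_swap_mul_self a x τ) (fun τ _ => mul_swap_mul_self a x τ)

theorem card_ranked_last_eq_one {s : Finset α} (hs : s.Nonempty) (τ : Perm α) :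
    #(s.filter fun x => ∀ y ∈ s, y ≠ x → τ y < τ x) = 1 := by
  obtain ⟨x, hx, hmax⟩ := s.exists_max_image τ hs
  refine card_eq_one.mpr ⟨x, eq_singleton_iff_unique_mem.mpr ⟨?_, ?_⟩⟩
  · exact mem_filter.mpr ⟨hx, fun y hy hyx => (hmax y hy).lt_of_ne (τ.injective.ne hyx)⟩
  · intro y hy
    obtain ⟨hy, hymax⟩ := mem_filter.mp hy
    by_contra hyx
    exact (hymax x hx (Ne.symm hyx)).not_ge (hmax y hy)

theorem card_mul_card_ranksLast {s : Finset α} {a : α} (ha : a ∈ s) :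
    #s * #(ranksLast s a) = Fintype.card (Perm α) := by
  calc #s * #(ranksLast s a) = ∑ x ∈ s, #(ranksLast s x) := by
        rw [sum_congr rfl fun x hx => card_ranksLast_eq ha hx, sum_const, smul_eq_mul]
    _ = ∑ τ : Perm α, #(s.filter fun x => ∀ y ∈ s, y ≠ x → τ y < τ x) := by
        simp only [ranksLast, card_filter]
        exact sum_comm
    _ = Fintype.card (Perm α) := by
        simp [card_ranked_last_eq_one ⟨a, ha⟩]

theorem card_filter_lt_and_lt (a b c : α) :
    (#(univ.filter fun τ : Perm α => τ b < τ a ∧ τ c < τ a) : ℝ) =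
      Fintype.card (Perm α) *
        ((if b ≠ a ∧ c ≠ a then 1 / 3 else 0) + (if b ≠ a ∧ b = c then 1 / 6 else 0)) := by
  by_cases hba : b = a
  · subst hba; simp
  by_cases hca : c = a
  · subst hca; simp
  have key : ∀ s : Finset α, a ∈ s →
      (univ.filter fun τ : Perm α => τ b < τ a ∧ τ c < τ a) = ranksLast s a →
      (#(univ.filter fun τ : Perm α => τ b < τ a ∧ τ c < τ a) : ℝ) =
        Fintype.card (Perm α) / #s := by
    intro s ha hs
    rw [hs, ← card_mul_card_ranksLast ha]
    have : (#s : ℝ) ≠ 0 := by exact_mod_cast (card_pos.mpr ⟨a, ha⟩).ne'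
    push_cast
    field_simp
  by_cases hbc : b = c
  · subst hbc
    rw [key {a, b} (by simp) (by ext τ; simp [ranksLast, hba]), card_pair (Ne.symm hba),
      if_pos ⟨hba, hba⟩, if_pos ⟨hba, rfl⟩]
    push_cast
    ring
  · rw [key {a, b, c} (by simp) (by ext τ; simp [ranksLast, hba, hca]),
      card_insert_of_notMem (by simp [Ne.symm hba, Ne.symm hca]), card_pair hbc,
      if_pos ⟨hba, hca⟩, if_neg fun h => hbc h.2]
    push_cast
    ring

end Equiv.Perm

section Prefix

variable {α : Type*} [Fintype α] [LinearOrder α]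

theorem sum_perm_sum_prefix {E M : Type*} [AddCommMonoid E] [AddCommMonoid M]
    (Φ : α → E → M) (g : α → E) :
    ∑ σ : Perm α, ∑ i, Φ (σ i) (∑ j ∈ univ.filter (fun j => j < i), g (σ j)) =
      ∑ τ : Perm α, ∑ a, Φ a (∑ b ∈ univ.filter (fun b => τ b < τ a), g b) := by
  rw [← Equiv.sum_comp (Equiv.inv (Perm α))]
  refine sum_congr rfl fun τ _ => ?_
  rw [← Equiv.sum_comp τ]
  refine sum_congr rfl fun a _ => ?_
  simp only [Equiv.inv_apply, Perm.inv_def, symm_apply_apply]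
  congr 1
  exact (sum_equiv τ (by simp) (by simp)).symm

theorem sum_perm_norm_sq_sum_prefix {E : Type*} [NormedAddCommGroup E] [InnerProductSpace ℝ E]
    (g : α → E) (a : α) :
    ∑ τ : Perm α, ‖∑ b ∈ univ.filter (fun b => τ b < τ a), g b‖ ^ 2 =
      Fintype.card (Perm α) * (1 / 3 * ‖∑ b ∈ univ.erase a, g b‖ ^ 2 +
        1 / 6 * ∑ b ∈ univ.erase a, ‖g b‖ ^ 2) := by
  have expand : ∀ s : Finset α, ‖∑ b ∈ s, g b‖ ^ 2 = ∑ b ∈ s, ∑ c ∈ s, inner ℝ (g b) (g c) := by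
    intro s
    rw [← real_inner_self_eq_norm_sq, sum_inner]
    simp only [inner_sum]
  calc ∑ τ : Perm α, ‖∑ b ∈ univ.filter (fun b => τ b < τ a), g b‖ ^ 2
      = ∑ b, ∑ c, ∑ τ : Perm α, if τ b < τ a ∧ τ c < τ a then inner ℝ (g b) (g c) else 0 := by
        simp_rw [expand, sum_filter, ite_sum_zero, ite_and]
        rw [sum_comm]
        exact sum_congr rfl fun b _ => sum_comm
    _ = ∑ b, ∑ c, (#(univ.filter fun τ : Perm α => τ b < τ a ∧ τ c < τ a) : ℝ) *
          inner ℝ (g b) (g c) := by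
        simp only [← sum_filter, sum_const, nsmul_eq_mul]
    _ = Fintype.card (Perm α) *
          (1 / 3 * ∑ b ∈ univ.erase a, ∑ c ∈ univ.erase a, inner ℝ (g b) (g c) +
            1 / 6 * ∑ b ∈ univ.erase a, inner ℝ (g b) (g b)) := by
        have weight : ∀ b c, (#(univ.filter fun τ : Perm α => τ b < τ a ∧ τ c < τ a) : ℝ) *
            inner ℝ (g b) (g c) = Fintype.card (Perm α) *
              (1 / 3 * (if b ≠ a then if c ≠ a then inner ℝ (g b) (g c) else 0 else 0) +
                1 / 6 * (if b = c then if b ≠ a then inner ℝ (g b) (g c) else 0 else 0)) := by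
          intro b c
          rw [Perm.card_filter_lt_and_lt]
          split_ifs <;> simp_all <;> ring
        simp only [weight, ← mul_sum, sum_add_distrib, sum_ite_eq, mem_univ, if_true, ← filter_ne',
          sum_filter, ite_sum_zero]
    _ = _ := by rw [expand]; simp only [real_inner_self_eq_norm_sq]

end Prefix

theorem norm_sq_sum_erase_add_sum_norm_sq_erase_le {ι E : Type*} [Fintype ι] [DecidableEq ι]
    [NormedAddCommGroup E] [InnerProductSpace ℝ E] (g : ι → E) (a : ι) :
    1 / 3 * ‖∑ b ∈ univ.erase a, g b‖ ^ 2 + 1 / 6 * ∑ b ∈ univ.erase a, ‖g b‖ ^ 2 ≤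
      2 / 3 * (∑ b, ‖g b‖ ^ 2 + ‖∑ b, g b‖ ^ 2) := by
  rw [sum_erase_eq_sub (mem_univ a), sum_erase_eq_sub (mem_univ a)]
  have hga : ‖g a‖ ^ 2 ≤ ∑ b, ‖g b‖ ^ 2 :=
    single_le_sum (f := fun b => ‖g b‖ ^ 2) (fun _ _ => sq_nonneg _) (mem_univ a)
  have hsub : ‖∑ b, g b - g a‖ ^ 2 ≤ 2 * (‖∑ b, g b‖ ^ 2 + ‖g a‖ ^ 2) :=
    (pow_le_pow_left₀ (norm_nonneg _) (norm_sub_le _ _) 2).trans add_sq_le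
  linarith

theorem stmt_3_general {dim n : ℕ} (hn : 2 ≤ n)
    (f' : Fin n → EuclideanSpace ℝ (Fin dim) → EuclideanSpace ℝ (Fin dim))
    (xstar : EuclideanSpace ℝ (Fin dim))
    (L : Fin n → ℝ) (hL : ∀ i, 0 < L i) :
    (1 / (Fintype.card (Equiv.Perm (Fin n)) : ℝ)) *
      ∑ σ : Equiv.Perm (Fin n),
        ∑ i : Fin n, (L (σ i) / n) *
          ‖∑ j ∈ Finset.univ.filter (fun j => j < i), f' (σ j) xstar‖ ^ 2
      ≤ (2 / 3) * n * ((1 / n) * ∑ i : Fin n, L i)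
        * (((1 / n) * ∑ i : Fin n, ‖f' i xstar‖ ^ 2)
            + n * ‖(n : ℝ)⁻¹ • ∑ i : Fin n, f' i xstar‖ ^ 2) := by
  set g := fun i => f' i xstar
  have hcard : (Fintype.card (Perm (Fin n)) : ℝ) ≠ 0 := by positivity
  have hn0 : (n : ℝ) ≠ 0 := by positivity
  calc (1 / (Fintype.card (Perm (Fin n)) : ℝ)) * ∑ σ : Perm (Fin n), ∑ i : Fin n,
          (L (σ i) / n) * ‖∑ j ∈ univ.filter (fun j => j < i), g (σ j)‖ ^ 2
      = ∑ a, L a / n * (1 / 3 * ‖∑ b ∈ univ.erase a, g b‖ ^ 2 +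
          1 / 6 * ∑ b ∈ univ.erase a, ‖g b‖ ^ 2) := by
        rw [sum_perm_sum_prefix (fun a v => L a / n * ‖v‖ ^ 2) g, sum_comm]
        simp_rw [← mul_sum, sum_perm_norm_sq_sum_prefix, mul_sum]
        refine sum_congr rfl fun a _ => ?_
        field_simp
    _ ≤ ∑ a, L a / n * (2 / 3 * (∑ b, ‖g b‖ ^ 2 + ‖∑ b, g b‖ ^ 2)) := by
        gcongr with a
        · exact div_nonneg (hL a).le n.cast_nonneg
        · exact norm_sq_sum_erase_add_sum_norm_sq_erase_le g a
    _ = _ := by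
        rw [← sum_mul, ← sum_div, norm_smul, norm_inv, Real.norm_natCast]
        field_simp
        ring

theorem stmt_3 {dim n : ℕ} (hn : 2 ≤ n)
    (f : Fin n → EuclideanSpace ℝ (Fin dim) → ℝ)
    (f' : Fin n → EuclideanSpace ℝ (Fin dim) → EuclideanSpace ℝ (Fin dim))
    (hgrad : ∀ i x, HasGradientAt (f i) (f' i x) x)
    (xstar : EuclideanSpace ℝ (Fin dim))
    (L : Fin n → ℝ) (hL : ∀ i, 0 < L i) :
    (1 / (Fintype.card (Equiv.Perm (Fin n)) : ℝ)) *
      ∑ σ : Equiv.Perm (Fin n),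
        ∑ i : Fin n, (L (σ i) / n) *
          ‖∑ j ∈ Finset.univ.filter (fun j => j < i), f' (σ j) xstar‖ ^ 2
      ≤ (2 / 3) * n * ((1 / n) * ∑ i : Fin n, L i)
        * (((1 / n) * ∑ i : Fin n, ‖f' i xstar‖ ^ 2)
            + n * ‖(n : ℝ)⁻¹ • ∑ i : Fin n, f' i xstar‖ ^ 2) :=
  stmt_3_general hn f' xstar L hL
end

section
/- Let f_i : ℝ^d → ℝ be convex and differentiable with L_i-Lipschitz gradients, σ a permutation of [n], z, x_* ∈ ℝ^d, and points y^1, ..., y^n, w ∈ ℝ^d. Then Σ_{i=2}^{n} L_{σ(i)} ‖Σ_{j=1}^{i-1} (∇f_{σ(j)}(z) − ∇f_{σ(j)}(x_*))‖² ≤ 2 n³ L̄² B_f(z, x_*), where L̄ = (1/n)Σ L_i, f = (1/n)Σ f_i, and B_f(z, x_*) = f(z) − f(x_*) − ⟨∇f(x_*), z − x_*⟩. -/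
/-!
Cocoercivity, `‖∇fᵢ(z) - ∇fᵢ(x⋆)‖² ≤ 2 Lᵢ B_{fᵢ}(z, x⋆)`, follows by evaluating the first-order
convexity inequality at `x⋆` and the descent lemma at `z` in the point
`z - Lᵢ⁻¹ (∇fᵢ(z) - ∇fᵢ(x⋆))`. With the weighted Cauchy–Schwarz inequality
`‖∑ⱼ aⱼ‖² ≤ (∑ⱼ Lⱼ) ∑ⱼ ‖aⱼ‖² / Lⱼ` it bounds the squared norm of every partial sum by
`2 (∑ Lᵢ) ∑ B_{fᵢ}(z, x⋆)`, as Bregman divergences of convex functions are nonnegative.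
Summing against the weights `L_{σ(i)}` gives `2 (∑ Lᵢ)² ∑ B_{fᵢ}(z, x⋆)`, which is the
right-hand side.
-/

open scoped RealInnerProductSpace
open Set AffineMap

section Bregman

variable {E : Type*} [NormedAddCommGroup E] [InnerProductSpace ℝ E]
  {f : E → ℝ} {f' : E → E} {g x y : E}

def bregmanDiv (f : E → ℝ) (f' : E → E) (y x : E) : ℝ := f y - f x - ⟪f' x, y - x⟫

theorem sum_bregmanDiv {ι : Type*} (s : Finset ι) (f : ι → E → ℝ) (f' : ι → E → E) (y x : E) :
    ∑ i ∈ s, bregmanDiv (f i) (f' i) y x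
      = ∑ i ∈ s, f i y - ∑ i ∈ s, f i x - ⟪∑ i ∈ s, f' i x, y - x⟫ := by
  simp only [bregmanDiv, Finset.sum_sub_distrib, sum_inner]

variable [CompleteSpace E]

theorem HasGradientAt.hasDerivAt_comp_lineMap {t : ℝ} (h : HasGradientAt f g (lineMap x y t)) :
    HasDerivAt (f ∘ lineMap (k := ℝ) x y) ⟪g, y - x⟫ t := by
  have := h.hasFDerivAt.comp_hasDerivAt t hasDerivAt_lineMap
  rw [InnerProductSpace.toDual_apply_apply] at this
  exact this

theorem ConvexOn.add_inner_le_of_hasGradientAt (hf : ConvexOn ℝ univ f) (hg : HasGradientAt f g x)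
    (y : E) : f x + ⟪g, y - x⟫ ≤ f y := by
  have hline : ConvexOn ℝ univ (f ∘ lineMap (k := ℝ) x y) := hf.comp_affineMap _
  have hderiv : HasDerivAt (f ∘ lineMap (k := ℝ) x y) ⟪g, y - x⟫ 0 :=
    HasGradientAt.hasDerivAt_comp_lineMap (by simpa using hg)
  have := hline.le_slope_of_hasDerivAt (mem_univ 0) (mem_univ 1) one_pos hderiv
  simp only [slope_def_field, Function.comp_apply, lineMap_apply_one, lineMap_apply_zero,
    sub_zero, div_one] at this
  linarith

theorem bregmanDiv_nonneg (hf : ConvexOn ℝ univ f) (hx : HasGradientAt f (f' x) x) (y : E) :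
    0 ≤ bregmanDiv f f' y x := by
  have := hf.add_inner_le_of_hasGradientAt hx y
  rw [bregmanDiv]
  linarith

theorem le_add_inner_add_half_mul_norm_sq (hf : ∀ x, HasGradientAt f (f' x) x) {L : ℝ}
    (hlip : ∀ x y, ‖f' x - f' y‖ ≤ L * ‖x - y‖) (x y : E) :
    f y ≤ f x + ⟪f' x, y - x⟫ + L / 2 * ‖y - x‖ ^ 2 := by
  set φ : ℝ → ℝ := fun t ↦
    f (lineMap x y t) - t * ⟪f' x, y - x⟫ - L / 2 * ‖y - x‖ ^ 2 * t ^ 2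
  have hφ : ∀ t, HasDerivAt φ
      (⟪f' (lineMap x y t) - f' x, y - x⟫ - L * ‖y - x‖ ^ 2 * t) t := fun t ↦ by
    have := (((hf (lineMap x y t)).hasDerivAt_comp_lineMap (x := x) (y := y)).sub
      ((hasDerivAt_id t).mul_const ⟪f' x, y - x⟫)).sub
      ((hasDerivAt_pow 2 t).const_mul (L / 2 * ‖y - x‖ ^ 2))
    refine this.congr_deriv ?_
    rw [inner_sub_left]
    ring
  have hφ_nonpos : ∀ t ∈ interior (Ici (0 : ℝ)),
      ⟪f' (lineMap x y t) - f' x, y - x⟫ - L * ‖y - x‖ ^ 2 * t ≤ 0 := by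
    intro t ht
    rw [interior_Ici, mem_Ioi] at ht
    refine sub_nonpos.mpr ?_
    have hdist : ‖lineMap x y t - x‖ = t * ‖y - x‖ := by
      rw [← vsub_eq_sub, lineMap_vsub_left, norm_smul, Real.norm_of_nonneg ht.le, vsub_eq_sub]
    calc ⟪f' (lineMap x y t) - f' x, y - x⟫
        ≤ ‖f' (lineMap x y t) - f' x‖ * ‖y - x‖ := real_inner_le_norm _ _
      _ ≤ L * ‖lineMap x y t - x‖ * ‖y - x‖ := by gcongr; exact hlip _ _
      _ = L * ‖y - x‖ ^ 2 * t := by rw [hdist]; ring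
  have hanti : AntitoneOn φ (Ici 0) := antitoneOn_of_hasDerivWithinAt_nonpos (convex_Ici 0)
    (fun t _ ↦ (hφ t).continuousAt.continuousWithinAt) (fun t _ ↦ (hφ t).hasDerivWithinAt)
    hφ_nonpos
  have := hanti (mem_Ici.mpr le_rfl) (mem_Ici.mpr zero_le_one) zero_le_one
  simp only [φ, lineMap_apply_one, lineMap_apply_zero, one_mul, one_pow, mul_one, zero_mul,
    zero_pow two_ne_zero, mul_zero, sub_zero] at this
  linarith

theorem norm_sub_sq_le_two_mul_bregmanDiv (hconv : ConvexOn ℝ univ f)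
    (hf : ∀ x, HasGradientAt f (f' x) x) {L : ℝ} (hL : 0 < L)
    (hlip : ∀ x y, ‖f' x - f' y‖ ≤ L * ‖x - y‖) (x y : E) :
    ‖f' y - f' x‖ ^ 2 ≤ 2 * L * bregmanDiv f f' y x := by
  set d := f' y - f' x
  set w := y - L⁻¹ • d
  have hlower := hconv.add_inner_le_of_hasGradientAt (hf x) w
  have hupper := le_add_inner_add_half_mul_norm_sq hf hlip y w
  have hwx : w - x = (y - x) - L⁻¹ • d := by simp only [w]; abel
  have hwy : w - y = -(L⁻¹ • d) := by simp only [w]; abel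
  have hd : ⟪f' y, d⟫ - ⟪f' x, d⟫ = ‖d‖ ^ 2 := by
    rw [← inner_sub_left, real_inner_self_eq_norm_sq]
  rw [hwx, inner_sub_right, real_inner_smul_right] at hlower
  rw [hwy, inner_neg_right, real_inner_smul_right, norm_neg, norm_smul,
    Real.norm_of_nonneg (inv_nonneg.mpr hL.le)] at hupper
  rw [bregmanDiv]
  field_simp at hlower hupper ⊢
  nlinarith

end Bregman

section WeightedSums

variable {ι F : Type*} [SeminormedAddCommGroup F] {a : ι → F} {w b : ι → ℝ}

theorem norm_sum_sq_le_sum_mul_sum_of_sq_le_mul (s : Finset ι) (hw : ∀ i ∈ s, 0 ≤ w i)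
    (hb : ∀ i ∈ s, 0 ≤ b i) (hab : ∀ i ∈ s, ‖a i‖ ^ 2 ≤ w i * b i) :
    ‖∑ i ∈ s, a i‖ ^ 2 ≤ (∑ i ∈ s, w i) * ∑ i ∈ s, b i := calc
  ‖∑ i ∈ s, a i‖ ^ 2 ≤ (∑ i ∈ s, ‖a i‖) ^ 2 := by gcongr; exact norm_sum_le s a
  _ ≤ (∑ i ∈ s, w i) * ∑ i ∈ s, b i := Finset.sum_sq_le_sum_mul_sum_of_sq_le_mul s hw hb hab

theorem sum_mul_norm_sum_sq_le [Fintype ι] (s : ι → Finset ι) (hw : ∀ i, 0 ≤ w i)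
    (hb : ∀ i, 0 ≤ b i) (hab : ∀ i, ‖a i‖ ^ 2 ≤ w i * b i) :
    ∑ i, w i * ‖∑ j ∈ s i, a j‖ ^ 2 ≤ (∑ i, w i) ^ 2 * ∑ i, b i := by
  have hpartial : ∀ i, ‖∑ j ∈ s i, a j‖ ^ 2 ≤ (∑ i, w i) * ∑ i, b i := fun i ↦ calc
    ‖∑ j ∈ s i, a j‖ ^ 2 ≤ (∑ j ∈ s i, w j) * ∑ j ∈ s i, b j :=
      norm_sum_sq_le_sum_mul_sum_of_sq_le_mul _ (fun j _ ↦ hw j) (fun j _ ↦ hb j) fun j _ ↦ hab j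
    _ ≤ (∑ i, w i) * ∑ i, b i :=
      mul_le_mul (Finset.sum_le_univ_sum_of_nonneg hw) (Finset.sum_le_univ_sum_of_nonneg hb)
        (Finset.sum_nonneg fun j _ ↦ hb j) (Finset.sum_nonneg fun j _ ↦ hw j)
  calc ∑ i, w i * ‖∑ j ∈ s i, a j‖ ^ 2 ≤ ∑ i, w i * ((∑ i, w i) * ∑ i, b i) := by
        gcongr with i; exacts [hw i, hpartial i]
    _ = (∑ i, w i) ^ 2 * ∑ i, b i := by rw [← Finset.sum_mul]; ring

end WeightedSums

theorem stmt_13 {dim n : ℕ}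
    (f : Fin n → EuclideanSpace ℝ (Fin dim) → ℝ)
    (f' : Fin n → EuclideanSpace ℝ (Fin dim) → EuclideanSpace ℝ (Fin dim))
    (hconv : ∀ i, ConvexOn ℝ Set.univ (f i))
    (hgrad : ∀ i x, HasGradientAt (f i) (f' i x) x)
    (L : Fin n → ℝ) (hL : ∀ i, 0 < L i)
    (hlip : ∀ i x y, ‖f' i x - f' i y‖ ≤ L i * ‖x - y‖)
    (σ : Equiv.Perm (Fin n))
    (z xstar : EuclideanSpace ℝ (Fin dim)) :
    ∑ i : Fin n, L (σ i) *
        ‖∑ j ∈ Finset.univ.filter (fun j => j < i),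
            (f' (σ j) z - f' (σ j) xstar)‖ ^ 2
      ≤ 2 * (n : ℝ) ^ 3 * ((1 / n) * ∑ i : Fin n, L i) ^ 2 *
        (((1 / n) * ∑ i : Fin n, f i z) - ((1 / n) * ∑ i : Fin n, f i xstar)
          - ⟪(n : ℝ)⁻¹ • ∑ i : Fin n, f' i xstar, z - xstar⟫) := by
  have hbound := sum_mul_norm_sum_sq_le (fun i ↦ Finset.univ.filter (· < i))
    (a := fun j ↦ f' (σ j) z - f' (σ j) xstar) (w := fun j ↦ L (σ j))
    (b := fun j ↦ 2 * bregmanDiv (f (σ j)) (f' (σ j)) z xstar) (fun i ↦ (hL (σ i)).le)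
    (fun i ↦ mul_nonneg zero_le_two (bregmanDiv_nonneg (hconv _) (hgrad _ _) z))
    (fun i ↦ (norm_sub_sq_le_two_mul_bregmanDiv (hconv _) (hgrad _) (hL _) (hlip _) xstar
      z).trans_eq (by ring))
  rw [Equiv.sum_comp σ L, Equiv.sum_comp σ (fun i ↦ 2 * bregmanDiv (f i) (f' i) z xstar),
    ← Finset.mul_sum, sum_bregmanDiv] at hbound
  refine hbound.trans_eq ?_
  rcases eq_or_ne n 0 with rfl | hn
  · simp
  rw [real_inner_smul_left]
  field_simp
end

section
/- Let f_i : ℝ^d → ℝ be convex with ‖∇f_i(x)‖ ≤ G_i for all x, i ∈ [n], let Ḡ = (1/n)Σ G_i, σ a permutation of [n], η > 0, and define y^1 = x and y^{i+1} = y^i − η ∇f_{σ(i)}(y^i) for i ∈ [n]. Then for any point w ∈ ℝ^d and any z ∈ ℝ^d: (1/n)Σ_{i=1}^n [B_{f_{σ(i)}}(w, y^i) − B_{f_{σ(i)}}(z, y^i)] ≤ 2Ḡ‖w − x‖ + Ḡ² n η. -/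
open scoped RealInnerProductSpace

/-!
Write `B(u, v) = f u - f v - ⟪∇f v, u - v⟫`. Convexity gives `B(z, y) ≥ 0` and
`B(w, y) ≤ ⟪∇f w - ∇f y, w - y⟫ ≤ 2G‖w - y‖`. The `i`-th iterate lies within
`η ∑_{j<i} G_{σ j}` of `x`, so with `S = ∑ G_i` the summed divergence gaps are at most
`2S‖w - x‖ + 2η ∑_i ∑_{j<i} G_{σ i} G_{σ j} ≤ 2S‖w - x‖ + ηS²`; divide by `n`.
-/

open Finset

theorem ConvexOn.add_fderiv_sub_le {E : Type*} [NormedAddCommGroup E] [NormedSpace ℝ E]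
    {s : Set E} {f : E → ℝ} {f' : E →L[ℝ] ℝ} {u v : E} (hf : ConvexOn ℝ s f)
    (hu : u ∈ s) (hv : v ∈ s) (hf' : HasFDerivAt f f' v) : f v + f' (u - v) ≤ f u := by
  set ℓ : ℝ →ᵃ[ℝ] E := AffineMap.lineMap v u
  have hderiv : HasDerivAt (f ∘ ℓ) (f' (u - v)) 0 := by
    rw [← AffineMap.lineMap_apply_zero (k := ℝ) v u] at hf'
    exact hf'.comp_hasDerivAt 0 AffineMap.hasDerivAt_lineMap
  have := (hf.comp_affineMap ℓ).le_slope_of_hasDerivAt (x := 0) (y := 1)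
    (by simpa [ℓ] using hv) (by simpa [ℓ] using hu) one_pos hderiv
  simp only [slope_def_field, Function.comp_apply, AffineMap.lineMap_apply_one,
    AffineMap.lineMap_apply_zero, sub_zero, div_one, ℓ] at this
  linarith

section Bregman

variable {E : Type*} [NormedAddCommGroup E] [InnerProductSpace ℝ E] [CompleteSpace E]

def bregman (f : E → ℝ) (f' : E → E) (u v : E) : ℝ :=
  f u - f v - ⟪f' v, u - v⟫

variable {f : E → ℝ} {f' : E → E}

theorem bregman_nonneg (hf : ConvexOn ℝ Set.univ f) {u v : E} (hv : HasGradientAt f (f' v) v) :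
    0 ≤ bregman f f' u v := by
  have := hf.add_fderiv_sub_le (Set.mem_univ u) (Set.mem_univ v) hv.hasFDerivAt
  rw [InnerProductSpace.toDual_apply_apply] at this
  unfold bregman
  linarith

theorem bregman_le_inner_sub (hf : ConvexOn ℝ Set.univ f) {u v : E}
    (hu : HasGradientAt f (f' u) u) : bregman f f' u v ≤ ⟪f' u - f' v, u - v⟫ := by
  have := bregman_nonneg (u := v) hf hu
  unfold bregman at *
  rw [inner_sub_left, ← neg_sub u v, inner_neg_right] at *
  linarith

theorem bregman_le_two_mul_norm_sub (hf : ConvexOn ℝ Set.univ f) {G : ℝ} (hG : ∀ p, ‖f' p‖ ≤ G)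
    {u v : E} (hu : HasGradientAt f (f' u) u) : bregman f f' u v ≤ 2 * G * ‖u - v‖ :=
  calc bregman f f' u v ≤ ⟪f' u - f' v, u - v⟫ := bregman_le_inner_sub hf hu
    _ ≤ ‖f' u - f' v‖ * ‖u - v‖ := real_inner_le_norm _ _
    _ ≤ (G + G) * ‖u - v‖ := by gcongr; exact (norm_sub_le _ _).trans (add_le_add (hG u) (hG v))
    _ = 2 * G * ‖u - v‖ := by ring

theorem bregman_sub_bregman_le (hf : ConvexOn ℝ Set.univ f)
    (hgrad : ∀ p, HasGradientAt f (f' p) p) {G : ℝ} (hG : ∀ p, ‖f' p‖ ≤ G) (w z v : E) :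
    bregman f f' w v - bregman f f' z v ≤ 2 * G * ‖w - v‖ := by
  linarith [bregman_nonneg (u := z) hf (hgrad v),
    bregman_le_two_mul_norm_sub hf hG (v := v) (hgrad w)]

end Bregman

theorem two_mul_sum_range_mul_sum_range_le_sq (a : ℕ → ℝ) (n : ℕ) :
    2 * ∑ i ∈ range n, a i * ∑ j ∈ range i, a j ≤ (∑ i ∈ range n, a i) ^ 2 := by
  induction n with
  | zero => simp
  | succ n ih =>
    rw [sum_range_succ, sum_range_succ]
    nlinarith [sq_nonneg (a n)]

theorem norm_sub_le_add_sum_of_dist_le {E : Type*} [SeminormedAddCommGroup E] (y : ℕ → E)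
    (w : E) {d : ℕ → ℝ} (i : ℕ) (hd : ∀ {k}, k < i → dist (y k) (y (k + 1)) ≤ d k) :
    ‖w - y i‖ ≤ ‖w - y 0‖ + ∑ k ∈ range i, d k :=
  calc ‖w - y i‖ ≤ ‖w - y 0‖ + dist (y 0) (y i) := by
        rw [dist_eq_norm]; exact norm_sub_le_norm_sub_add_norm_sub _ _ _
    _ ≤ ‖w - y 0‖ + ∑ k ∈ range i, d k := by grw [dist_le_range_sum_of_dist_le i hd]

theorem sum_range_mul_add_partial_sum_le (a : ℕ → ℝ) (n : ℕ) (c : ℝ) {η : ℝ} (hη : 0 ≤ η) :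
    ∑ i ∈ range n, 2 * a i * (c + η * ∑ j ∈ range i, a j)
      ≤ 2 * c * ∑ i ∈ range n, a i + η * (∑ i ∈ range n, a i) ^ 2 := by
  have hsplit : ∑ i ∈ range n, 2 * a i * (c + η * ∑ j ∈ range i, a j)
      = 2 * c * ∑ i ∈ range n, a i + η * (2 * ∑ i ∈ range n, a i * ∑ j ∈ range i, a j) := by
    rw [mul_sum _ a, mul_sum _ _ 2, mul_sum _ _ η, ← sum_add_distrib]
    exact sum_congr rfl fun i _ => by ring
  rw [hsplit]
  gcongr
  exact two_mul_sum_range_mul_sum_range_le_sq a n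

theorem stmt_18_general {dim n : ℕ}
    (f : Fin n → EuclideanSpace ℝ (Fin dim) → ℝ)
    (f' : Fin n → EuclideanSpace ℝ (Fin dim) → EuclideanSpace ℝ (Fin dim))
    (hconv : ∀ i, ConvexOn ℝ Set.univ (f i))
    (hgrad : ∀ i x, HasGradientAt (f i) (f' i x) x)
    (G : Fin n → ℝ)
    (hbound : ∀ i x, ‖f' i x‖ ≤ G i)
    (σ : Equiv.Perm (Fin n))
    (η : ℝ) (hη : 0 < η)
    (x : EuclideanSpace ℝ (Fin dim))
    (y : ℕ → EuclideanSpace ℝ (Fin dim))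
    (hy0 : y 0 = x)
    (hyrec : ∀ i : Fin n, y ((i : ℕ) + 1) = y i - η • f' (σ i) (y i)) :
    ∀ w z : EuclideanSpace ℝ (Fin dim),
      (1 / n) * ∑ i : Fin n,
          ((f (σ i) w - f (σ i) (y i) - ⟪f' (σ i) (y i), w - y i⟫)
            - (f (σ i) z - f (σ i) (y i) - ⟪f' (σ i) (y i), z - y i⟫))
        ≤ 2 * ((1 / n) * ∑ i : Fin n, G i) * ‖w - x‖
          + ((1 / n) * ∑ i : Fin n, G i) ^ 2 * n * η := by
  intro w z
  -- zero-extension of `G ∘ σ` to `ℕ`, so that the drift of the iterates is a partial sum over `range`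
  set a : ℕ → ℝ := fun j => if h : j < n then G (σ ⟨j, h⟩) else 0
  have ha : ∀ i : Fin n, a i = G (σ i) := fun i => dif_pos i.isLt
  have hsum_a : ∑ j ∈ range n, a j = ∑ i, G i := by
    rw [← Fin.sum_univ_eq_sum_range, ← Equiv.sum_comp σ G]
    exact sum_congr rfl fun i _ => ha i
  have hstep : ∀ {j}, j < n → dist (y j) (y (j + 1)) ≤ η * a j := by
    intro j hj
    have hy := hyrec ⟨j, hj⟩
    simp only at hy
    rw [dist_eq_norm, hy, sub_sub_cancel, norm_smul, Real.norm_of_nonneg hη.le,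
      (ha ⟨j, hj⟩ : a j = _)]
    exact mul_le_mul_of_nonneg_left (hbound _ _) hη.le
  have hterm : ∀ i : Fin n, bregman (f (σ i)) (f' (σ i)) w (y i)
      - bregman (f (σ i)) (f' (σ i)) z (y i) ≤ 2 * a i * (‖w - x‖ + η * ∑ j ∈ range i, a j) := by
    intro i
    have hG : 0 ≤ G (σ i) := (norm_nonneg _).trans (hbound (σ i) x)
    have hdrift := norm_sub_le_add_sum_of_dist_le y w i fun hj => hstep (hj.trans i.isLt)
    rw [hy0, ← mul_sum] at hdrift
    grw [bregman_sub_bregman_le (hconv (σ i)) (hgrad (σ i)) (hbound (σ i)), hdrift, ha]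
  calc (1 / n) * ∑ i : Fin n, _
      ≤ (1 / n) * (2 * ‖w - x‖ * ∑ i, G i + η * (∑ i, G i) ^ 2) := by
        gcongr
        refine (sum_le_sum fun i _ => hterm i).trans ?_
        rw [Fin.sum_univ_eq_sum_range (fun i => 2 * a i * (‖w - x‖ + η * ∑ j ∈ range i, a j)),
          ← hsum_a]
        exact sum_range_mul_add_partial_sum_le a n _ hη.le
    _ = _ := by
        rcases eq_or_ne (n : ℝ) 0 with hn | hn
        · simp [hn]
        · field_simp

/-- here `y (i : ℕ)` represents the paper's `y^{i+1}`, so that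
`y 0 = x` is `y^1` and `y (i+1) = y i - η • ∇f_{σ(i)}(y i)` for `i ∈ [n]`. -/
theorem stmt_18 {dim n : ℕ}
    (f : Fin n → EuclideanSpace ℝ (Fin dim) → ℝ)
    (f' : Fin n → EuclideanSpace ℝ (Fin dim) → EuclideanSpace ℝ (Fin dim))
    (hconv : ∀ i, ConvexOn ℝ Set.univ (f i))
    (hgrad : ∀ i x, HasGradientAt (f i) (f' i x) x)
    (G : Fin n → ℝ) (hG : ∀ i, 0 < G i)
    (hbound : ∀ i x, ‖f' i x‖ ≤ G i)
    (σ : Equiv.Perm (Fin n))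
    (η : ℝ) (hη : 0 < η)
    (x : EuclideanSpace ℝ (Fin dim))
    (y : ℕ → EuclideanSpace ℝ (Fin dim))
    (hy0 : y 0 = x)
    (hyrec : ∀ i : Fin n, y ((i : ℕ) + 1) = y i - η • f' (σ i) (y i)) :
    ∀ w z : EuclideanSpace ℝ (Fin dim),
      (1 / n) * ∑ i : Fin n,
          ((f (σ i) w - f (σ i) (y i) - ⟪f' (σ i) (y i), w - y i⟫)
            - (f (σ i) z - f (σ i) (y i) - ⟪f' (σ i) (y i), z - y i⟫))
        ≤ 2 * ((1 / n) * ∑ i : Fin n, G i) * ‖w - x‖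
          + ((1 / n) * ∑ i : Fin n, G i) ^ 2 * n * η :=
  stmt_18_general f f' hconv hgrad G hbound σ η hη x y hy0 hyrec
end
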